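/- For every integer n ≥ 1, the independence domination number of the meta-chain hexagonal cactus M_n equals ⌈3n/2⌉. -/

import Mathlib

/-- `S` is an independent dominating set of `G`: pairwise non-adjacent, and every
vertex outside `S` has a neighbour in `S`. -/
def IsIndepDomSet {V : Type*} (G : SimpleGraph V) (S : Finset V) : Prop :=
  (∀ v ∈ S, ∀ w ∈ S, ¬ G.Adj v w) ∧ ∀ v, v ∉ S → ∃ w ∈ S, G.Adj v w

/-- The meta-chain hexagonal cactus `M n`: `Sum.inl i` is the cut vertex `x i`
(`0 ≤ i ≤ n`) and `Sum.inr (k, t)` for `t = 0, 1, 2, 3` is `a (k+1)`, `b (k+1)`,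
`c (k+1)`, `d (k+1)` respectively (`0 ≤ k ≤ n-1`); the `i`-th hexagon
(`1 ≤ i ≤ n`) is the six-cycle `x (i-1) – a i – x i – b i – c i – d i – x (i-1)`. -/
def metaHex (n : ℕ) : SimpleGraph (Fin (n + 1) ⊕ Fin n × Fin 4) :=
  SimpleGraph.fromRel fun p q =>
    match p, q with
    | Sum.inl i, Sum.inr (k, t) =>
        ((i : ℕ) = (k : ℕ) ∧ (t = 0 ∨ t = 3)) ∨
          ((i : ℕ) = (k : ℕ) + 1 ∧ (t = 0 ∨ t = 1))
    | Sum.inr (k, t), Sum.inr (k', t') =>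
        k = k' ∧ ((t = 1 ∧ t' = 2) ∨ (t = 2 ∧ t' = 3))
    | _, _ => False

/-- The number of independent dominating sets of the meta-chain hexagonal cactus `M n`. -/
noncomputable def numIDSMetaHex (n : ℕ) : ℕ :=
  Nat.card {S : Finset (Fin (n + 1) ⊕ Fin n × Fin 4) // IsIndepDomSet (metaHex n) S}

/-- The independence domination number of a graph: the minimum cardinality of an
independent dominating set. -/
noncomputable def indepDomNum {V : Type*} (G : SimpleGraph V) : ℕ :=
  sInf {k | ∃ S : Finset V, IsIndepDomSet G S ∧ S.card = k}

/-!
Lower bound: in every hexagon the vertex `c` must be dominated from inside `{b, c, d}` of that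
hexagon, which accounts for `n` distinct vertices; every `a` must be dominated by itself or by
one of the two cut vertices of its hexagon, and since a cut vertex serves at most two hexagons
this forces `⌈n/2⌉` further vertices among the cut vertices and the `a`'s.
Upper bound: three vertices per pair of consecutive hexagons suffice, and two for a last
unpaired hexagon.
-/

section Adjacency

variable {n : ℕ}

@[simp]
lemma metaHex_adj_inl_inl (i j : Fin (n + 1)) : ¬ (metaHex n).Adj (.inl i) (.inl j) := by
  simp [metaHex]

@[simp]
lemma metaHex_adj_inl_inr (i : Fin (n + 1)) (k : Fin n) (t : Fin 4) :
    (metaHex n).Adj (.inl i) (.inr (k, t)) ↔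
      ((i : ℕ) = k ∧ (t = 0 ∨ t = 3)) ∨ ((i : ℕ) = k + 1 ∧ (t = 0 ∨ t = 1)) := by
  simp [metaHex]

@[simp]
lemma metaHex_adj_inr_inl (k : Fin n) (t : Fin 4) (i : Fin (n + 1)) :
    (metaHex n).Adj (.inr (k, t)) (.inl i) ↔
      ((i : ℕ) = k ∧ (t = 0 ∨ t = 3)) ∨ ((i : ℕ) = k + 1 ∧ (t = 0 ∨ t = 1)) := by
  rw [SimpleGraph.adj_comm, metaHex_adj_inl_inr]

@[simp]
lemma metaHex_adj_inr_inr (k k' : Fin n) (t t' : Fin 4) :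
    (metaHex n).Adj (.inr (k, t)) (.inr (k', t')) ↔
      k = k' ∧ (t = 1 ∧ t' = 2 ∨ t = 2 ∧ t' = 1 ∨ t = 2 ∧ t' = 3 ∨ t = 3 ∧ t' = 2) := by
  simp only [metaHex, SimpleGraph.fromRel_adj]
  fin_cases t <;> fin_cases t' <;> simp [eq_comm]

end Adjacency

open Finset

lemma indepDomNum_eq_of_isIndepDomSet {V : Type*} {G : SimpleGraph V} {S : Finset V} {m : ℕ}
    (hS : IsIndepDomSet G S) (hSm : #S ≤ m) (hm : ∀ T, IsIndepDomSet G T → m ≤ #T) :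
    indepDomNum G = m := by
  unfold indepDomNum
  have hS' : #S ∈ {k | ∃ T : Finset V, IsIndepDomSet G T ∧ #T = k} := ⟨S, hS, rfl⟩
  refine le_antisymm ((Nat.sInf_le hS').trans hSm) (le_csInf ⟨_, hS'⟩ ?_)
  rintro _ ⟨T, hT, rfl⟩
  exact hm T hT

section LowerBound

variable {n : ℕ} {S : Finset (Fin (n + 1) ⊕ Fin n × Fin 4)}

lemma IsIndepDomSet.metaHex_exists_inr_ne_zero_mem (hS : IsIndepDomSet (metaHex n) S)
    (k : Fin n) :
    ∃ t ≠ 0, .inr (k, t) ∈ S := by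
  by_cases hc : .inr (k, 2) ∈ S
  · exact ⟨2, by decide, hc⟩
  obtain ⟨w | ⟨k', t⟩, hw, hadj⟩ := hS.2 _ hc
  · simp at hadj
  · simp only [metaHex_adj_inr_inr] at hadj
    obtain ⟨rfl, ht⟩ := hadj
    exact ⟨t, by rintro rfl; simp at ht, hw⟩

lemma IsIndepDomSet.metaHex_inr_zero_mem_or_exists_inl_mem (hS : IsIndepDomSet (metaHex n) S)
    (k : Fin n) :
    .inr (k, 0) ∈ S ∨ ∃ i : Fin (n + 1), .inl i ∈ S ∧ ((i : ℕ) = k ∨ (i : ℕ) = k + 1) := by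
  by_cases ha : .inr (k, 0) ∈ S
  · exact Or.inl ha
  obtain ⟨i | ⟨k', t⟩, hw, hadj⟩ := hS.2 _ ha
  · simp only [metaHex_adj_inr_inl] at hadj
    exact Or.inr ⟨i, hw, by omega⟩
  · simp at hadj

theorem IsIndepDomSet.metaHex_le_card (hS : IsIndepDomSet (metaHex n) S) :
    (3 * n + 1) / 2 ≤ #S := by
  set X := S.toLeft
  set A := S.toRight.filter (·.2 = 0)
  set B := S.toRight.filter (¬ ·.2 = 0)
  have hsplit : #X + (#A + #B) = #S := by
    rw [card_filter_add_card_filter_not, card_toLeft_add_card_toRight]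
  have hB : n ≤ #B := calc
    n = #(univ : Finset (Fin n)) := by simp
    _ ≤ #(B.image Prod.fst) := by
      refine card_le_card fun k _ => ?_
      obtain ⟨t, ht, hkt⟩ := hS.metaHex_exists_inr_ne_zero_mem k
      exact mem_image.2 ⟨(k, t), by simp [B, ht, hkt], rfl⟩
    _ ≤ #B := card_image_le
  -- a cut vertex dominates the `a`-vertices of at most two hexagons
  have hXA : n ≤ #A + 2 * #X := calc
    n = #(range n) := by simp
    _ ≤ #(A.image (·.1.val) ∪ X.image (·.val) ∪ X.image (·.val - 1)) := by
      refine card_le_card fun k hk => ?_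
      rw [mem_range] at hk
      rcases hS.metaHex_inr_zero_mem_or_exists_inl_mem ⟨k, hk⟩ with ha | ⟨i, hi, rfl | hik⟩
      all_goals simp only [mem_union, mem_image]
      · exact .inl (.inl ⟨(⟨k, hk⟩, 0), by simpa [A] using ha, rfl⟩)
      · exact .inl (.inr ⟨i, by simpa [X] using hi, rfl⟩)
      · exact .inr ⟨i, by simpa [X] using hi, by simp at hik; omega⟩
    _ ≤ #A + 2 * #X := by
      rw [two_mul, ← add_assoc]
      grw [card_union_le, card_union_le, card_image_le, card_image_le, card_image_le]
  omega

end LowerBound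

section UpperBound

variable {n : ℕ}

/-- The cut vertices `x i` with `i` odd, together with `d` in the even-indexed and `b` in the
odd-indexed hexagons; when `n` is odd, the last hexagon contributes `a` and `c` instead of `d`. -/
def metaHexIDS (n : ℕ) : Finset (Fin (n + 1) ⊕ Fin n × Fin 4) :=
  (univ.filter fun i : Fin (n + 1) => (i : ℕ) % 2 = 1 ∧ i < n).disjSum
    (univ.filter fun v : Fin n × Fin 4 =>
      (v.1 : ℕ) % 2 = 1 ∧ v.2 = 1 ∨ (v.1 : ℕ) % 2 = 0 ∧ v.1 + 1 < n ∧ v.2 = 3 ∨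
        (v.1 : ℕ) % 2 = 0 ∧ v.1 + 1 = n ∧ (v.2 = 0 ∨ v.2 = 2))

@[simp]
lemma inl_mem_metaHexIDS (i : Fin (n + 1)) :
    .inl i ∈ metaHexIDS n ↔ (i : ℕ) % 2 = 1 ∧ i < n := by
  simp [metaHexIDS]

@[simp]
lemma inr_mem_metaHexIDS (k : Fin n) (t : Fin 4) :
    .inr (k, t) ∈ metaHexIDS n ↔ (k : ℕ) % 2 = 1 ∧ t = 1 ∨ (k : ℕ) % 2 = 0 ∧ k + 1 < n ∧ t = 3 ∨
      (k : ℕ) % 2 = 0 ∧ k + 1 = n ∧ (t = 0 ∨ t = 2) := by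
  simp [metaHexIDS]

lemma isIndepDomSet_metaHexIDS (hn : 1 ≤ n) : IsIndepDomSet (metaHex n) (metaHexIDS n) := by
  refine ⟨?_, ?_⟩
  · rintro (i | ⟨k, t⟩) hv (j | ⟨k', t'⟩) hw
    all_goals simp only [inl_mem_metaHexIDS, inr_mem_metaHexIDS] at hv hw
    all_goals simp only [metaHex_adj_inl_inl, metaHex_adj_inl_inr, metaHex_adj_inr_inl,
      metaHex_adj_inr_inr, Fin.ext_iff, not_false_eq_true]
    all_goals omega
  · rintro (i | ⟨k, t⟩) hv
    · simp only [inl_mem_metaHexIDS] at hv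
      by_cases hi : (i : ℕ) < n
      · by_cases hlast : (i : ℕ) + 1 = n
        · exact ⟨.inr (⟨i, hi⟩, 0), by simp; omega, by simp⟩
        · exact ⟨.inr (⟨i, hi⟩, 3), by simp; omega, by simp⟩
      · by_cases hev : n % 2 = 0
        · exact ⟨.inr (⟨n - 1, by omega⟩, 1), by simp; omega, by simp; omega⟩
        · exact ⟨.inr (⟨n - 1, by omega⟩, 0), by simp; omega, by simp; omega⟩
    · have hk := k.isLt
      fin_cases t <;> simp at hv
      · by_cases hodd : (k : ℕ) % 2 = 1
        · exact ⟨.inl ⟨k, by omega⟩, by simp; omega, by simp⟩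
        · exact ⟨.inl ⟨k + 1, by omega⟩, by simp; omega, by simp⟩
      · by_cases hlast : (k : ℕ) + 1 = n
        · exact ⟨.inr (k, 2), by simp; omega, by simp⟩
        · exact ⟨.inl ⟨k + 1, by omega⟩, by simp; omega, by simp⟩
      · by_cases hodd : (k : ℕ) % 2 = 1
        · exact ⟨.inr (k, 1), by simp; omega, by simp⟩
        · exact ⟨.inr (k, 3), by simp; omega, by simp⟩
      · by_cases hodd : (k : ℕ) % 2 = 1
        · exact ⟨.inl ⟨k, by omega⟩, by simp; omega, by simp⟩
        · exact ⟨.inr (k, 2), by simp; omega, by simp⟩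

lemma card_metaHexIDS_le : #(metaHexIDS n) ≤ (3 * n + 1) / 2 := by
  -- hexagons `2m, 2m + 1` contribute `x (2m+1)`, `d (2m)`, `b (2m+1)`, sent to slots `3m`,
  -- `3m + 1`, `3m + 2`; a last unpaired hexagon `2m` contributes `c`, `a`, sent to `3m`, `3m + 1`
  let slot : Fin (n + 1) ⊕ Fin n × Fin 4 → ℕ :=
    Sum.elim (fun i => 3 * ((i : ℕ) / 2)) fun v => 3 * ((v.1 : ℕ) / 2) + ((v.2 : ℕ) + 1) % 3
  calc #(metaHexIDS n) ≤ #(range ((3 * n + 1) / 2)) := by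
        refine card_le_card_of_injOn slot ?_ ?_
        · rintro (i | ⟨k, t⟩) hv
          all_goals simp only [mem_coe, inl_mem_metaHexIDS, inr_mem_metaHexIDS] at hv
          all_goals simp only [slot, coe_range, Set.mem_Iio, Sum.elim_inl, Sum.elim_inr]
          all_goals omega
        · rintro (i | ⟨k, t⟩) hv (j | ⟨k', t'⟩) hw
          all_goals simp only [mem_coe, inl_mem_metaHexIDS, inr_mem_metaHexIDS] at hv hw
          all_goals simp only [slot, Sum.elim_inl, Sum.elim_inr, Sum.inl.injEq, Sum.inr.injEq,
            reduceCtorEq, Prod.ext_iff, Fin.ext_iff]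
          all_goals omega
    _ = (3 * n + 1) / 2 := card_range _

end UpperBound

theorem indepDomNum_metaHex (n : ℕ) (hn : 1 ≤ n) :
    indepDomNum (metaHex n) = (3 * n + 1) / 2 :=
  indepDomNum_eq_of_isIndepDomSet (isIndepDomSet_metaHexIDS hn) card_metaHexIDS_le
    fun _ hS => hS.metaHex_le_card
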